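/- arXiv:1210.5771 — 3 statements merged into one kernel-verified Lean document; each statement's English description precedes it below -/
import Mathlib

section
/- Suppose η : [0,T] → ℝ solves the Riccati equation η' = −𝔟_t η² − 2𝔞_t η + 𝔪_t with η(T) = 𝔮, and χ : [0,T] → ℝ solves χ' + (𝔞_t + 𝔟_t η_t)χ = 𝔡_t − 𝔠_t η_t with χ(T) = 𝔯, where all coefficient functions are continuous. If (x_t, y_t, z_t) solves the FBSDE dx_t = (𝔞_t x_t + 𝔟_t y_t + 𝔠_t)dt + σ dW_t with x_0 = x⁰ and y_t := η_t x_t + χ_t, z_t := σ η_t, then (y_t, z_t) satisfies dy_t = (𝔪_t x_t − 𝔞_t y_t + 𝔡_t)dt + z_t dW_t and y_T = 𝔮 x_T + 𝔯. -/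
/-!
Removing the noise, `u := x - σ W` is `C¹` with `u' = 𝔞 x + 𝔟 y + 𝔠`, so `y - σ η W = η u + χ`
is `C¹` and the fundamental theorem of calculus applies to it. The Riccati equation for `η` and
the linear equation for `χ` are exactly what reduce its derivative to `𝔪 x - 𝔞 y + 𝔡 - σ η' W`;
the remaining term `σ η W - ∫ σ η' W` is `∫ σ η dW` integrated by parts.
-/

open intervalIntegral Set MeasureTheory

theorem hasDerivAt_integral_of_continuousOn {f : ℝ → ℝ} {a b s : ℝ}
    (hf : ContinuousOn f (Icc a b)) (hs : s ∈ Ioo a b) :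
    HasDerivAt (fun t => ∫ u in a..t, f u) (f s) s := by
  have hIcc : Icc a b ∈ nhds s := Icc_mem_nhds hs.1 hs.2
  refine integral_hasDerivAt_right ?_ ?_ (hf.continuousAt hIcc)
  · refine (hf.mono ?_).intervalIntegrable
    rw [uIcc_of_le hs.1.le]
    exact Icc_subset_Icc_right hs.2.le
  · exact AEStronglyMeasurable.stronglyMeasurableAtFilter_of_mem
      (hf.aestronglyMeasurable measurableSet_Icc) hIcc

theorem continuousOn_integral_of_continuousOn {f : ℝ → ℝ} {a b : ℝ}
    (hf : ContinuousOn f (Icc a b)) :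
    ContinuousOn (fun t => ∫ u in a..t, f u) (Icc a b) := by
  rcases le_or_gt a b with hab | hba
  · rw [← uIcc_of_le hab] at hf ⊢
    exact continuousOn_primitive_interval (hf.integrableOn_compact isCompact_uIcc)
  · simp [Icc_eq_empty_of_lt hba]

theorem affine_pathwise_ito {a b σ x₀ : ℝ} {η η' χ χ' β W x : ℝ → ℝ}
    (hη : ∀ t ∈ Icc a b, HasDerivAt η (η' t) t) (hη' : ContinuousOn η' (Icc a b))
    (hχ : ∀ t ∈ Icc a b, HasDerivAt χ (χ' t) t) (hχ' : ContinuousOn χ' (Icc a b))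
    (hβ : ContinuousOn β (Icc a b)) (hW : ContinuousOn W (Icc a b))
    (hx : ∀ t ∈ Icc a b, x t = x₀ + (∫ s in a..t, β s) + σ * W t)
    {t : ℝ} (ht : t ∈ Icc a b) :
    η t * x t + χ t = η a * x a + χ a + (∫ s in a..t, η' s * x s + η s * β s + χ' s) +
      (σ * η t * W t - σ * η a * W a - ∫ s in a..t, σ * η' s * W s) := by
  set A := fun t => ∫ s in a..t, β s
  -- `G = η (x - σ W) + χ`, the part of `η x + χ` that is differentiable
  set G := fun t => η t * (x₀ + A t) + χ t
  have hηc : ContinuousOn η (Icc a b) := HasDerivAt.continuousOn hη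
  have hχc : ContinuousOn χ (Icc a b) := HasDerivAt.continuousOn hχ
  have hAc : ContinuousOn A (Icc a b) := continuousOn_integral_of_continuousOn hβ
  have hxc : ContinuousOn x (Icc a b) :=
    ((continuousOn_const.add hAc).add (continuousOn_const.mul hW)).congr hx
  have hsub : Icc a t ⊆ Icc a b := Icc_subset_Icc_right ht.2
  have hG : ∀ s ∈ Ioo a t, HasDerivAt G (η' s * x s + η s * β s + χ' s - σ * η' s * W s) s := by
    intro s hs
    have hs' : s ∈ Icc a b := hsub (Ioo_subset_Icc_self hs)
    refine (((hη s hs').mul ((hasDerivAt_integral_of_continuousOn hβ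
      ⟨hs.1, hs.2.trans_le ht.2⟩).const_add x₀)).add (hχ s hs')).congr_deriv ?_
    rw [hx s hs']
    ring
  have hGc : ContinuousOn G (Icc a t) :=
    ((hηc.mul (continuousOn_const.add hAc)).add hχc).mono hsub
  have hint : ∀ {g : ℝ → ℝ}, ContinuousOn g (Icc a b) → IntervalIntegrable g volume a t :=
    fun hg => (hg.mono (by rw [uIcc_of_le ht.1]; exact hsub)).intervalIntegrable
  have hdrift_int : IntervalIntegrable (fun s => η' s * x s + η s * β s + χ' s) volume a t :=
    hint (((hη'.mul hxc).add (hηc.mul hβ)).add hχ')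
  have hnoise_int : IntervalIntegrable (fun s => σ * η' s * W s) volume a t :=
    hint ((continuousOn_const.mul hη').mul hW)
  have hFTC := integral_eq_sub_of_hasDerivAt_of_le ht.1 hGc hG (hdrift_int.sub hnoise_int)
  rw [integral_sub hdrift_int hnoise_int] at hFTC
  simp only [G, A, integral_same] at hFTC
  rw [hx t ht, hx a ⟨le_rfl, ht.1.trans ht.2⟩, integral_same]
  linear_combination -hFTC

theorem stmt8_general (T σ q r x0 : ℝ)
    (𝔞 𝔟 𝔠 𝔪 𝔡 η χ : ℝ → ℝ)
    (h𝔞 : Continuous 𝔞) (h𝔟 : Continuous 𝔟) (h𝔠 : Continuous 𝔠)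
    (h𝔪 : Continuous 𝔪) (h𝔡 : Continuous 𝔡)
    (hη : ∀ t ∈ Set.Icc (0:ℝ) T,
      HasDerivAt η (-𝔟 t * (η t) ^ 2 - 2 * 𝔞 t * η t + 𝔪 t) t)
    (hηT : η T = q)
    (hχ : ∀ t ∈ Set.Icc (0:ℝ) T,
      HasDerivAt χ (𝔡 t - 𝔠 t * η t - (𝔞 t + 𝔟 t * η t) * χ t) t)
    (hχT : χ T = r)
    (W x : ℝ → ℝ) (hW : Continuous W) (hW0 : W 0 = 0) (hx : Continuous x)
    (hxeq : ∀ t ∈ Set.Icc (0:ℝ) T,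
      x t = x0 + (∫ s in (0:ℝ)..t, (𝔞 s * x s + 𝔟 s * (η s * x s + χ s) + 𝔠 s)) + σ * W t)
    (y z : ℝ → ℝ)
    (hy : ∀ t, y t = η t * x t + χ t) (hz : ∀ t, z t = σ * η t) :
    (∀ t ∈ Set.Icc (0:ℝ) T,
      y t = y 0 + (∫ s in (0:ℝ)..t, (𝔪 s * x s - 𝔞 s * y s + 𝔡 s)) +
        (z t * W t - ∫ s in (0:ℝ)..t,
          σ * (-𝔟 s * (η s) ^ 2 - 2 * 𝔞 s * η s + 𝔪 s) * W s)) ∧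
    y T = q * x T + r := by
  refine ⟨fun t ht => ?_, by rw [hy, hηT, hχT]⟩
  have hηc : ContinuousOn η (Icc 0 T) := HasDerivAt.continuousOn hη
  have hχc : ContinuousOn χ (Icc 0 T) := HasDerivAt.continuousOn hχ
  have hdrift : ∀ s, (-𝔟 s * η s ^ 2 - 2 * 𝔞 s * η s + 𝔪 s) * x s +
      η s * (𝔞 s * x s + 𝔟 s * (η s * x s + χ s) + 𝔠 s) +
      (𝔡 s - 𝔠 s * η s - (𝔞 s + 𝔟 s * η s) * χ s) = 𝔪 s * x s - 𝔞 s * y s + 𝔡 s := by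
    intro s
    rw [hy]
    ring
  have hxc := hx.continuousOn (s := Icc 0 T)
  have hito := affine_pathwise_ito hη (by fun_prop) hχ (by fun_prop) (by fun_prop)
    hW.continuousOn hxeq ht
  simp only [hdrift] at hito
  rw [hy, hy 0, hz, hito, hW0]
  ring

/-- If η solves the Riccati equation η' = −𝔟η² − 2𝔞η + 𝔪 with η(T) = 𝔮, χ solves
χ' + (𝔞+𝔟η)χ = 𝔡 − 𝔠η with χ(T) = 𝔯, and (pathwise) x solves the forward equation
dx_t = (𝔞x + 𝔟y + 𝔠)dt + σ dW_t with x_0 = x⁰ where y := ηx + χ, then y (with z := ση)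
solves dy_t = (𝔪x − 𝔞y + 𝔡)dt + z_t dW_t and y_T = 𝔮 x_T + 𝔯.  Since z is deterministic
and of class C¹, the stochastic integral ∫₀ᵗ z dW is expressed pathwise by integration
by parts: ∫₀ᵗ z dW = z_t W_t − ∫₀ᵗ z'_s W_s ds (W_0 = 0), with z' = σ η'. -/
theorem stmt8 (T σ q r x0 : ℝ) (hT : 0 < T) (hσ : 0 < σ)
    (𝔞 𝔟 𝔠 𝔪 𝔡 η χ : ℝ → ℝ)
    (h𝔞 : Continuous 𝔞) (h𝔟 : Continuous 𝔟) (h𝔠 : Continuous 𝔠)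
    (h𝔪 : Continuous 𝔪) (h𝔡 : Continuous 𝔡)
    (hη : ∀ t ∈ Set.Icc (0:ℝ) T,
      HasDerivAt η (-𝔟 t * (η t) ^ 2 - 2 * 𝔞 t * η t + 𝔪 t) t)
    (hηT : η T = q)
    (hχ : ∀ t ∈ Set.Icc (0:ℝ) T,
      HasDerivAt χ (𝔡 t - 𝔠 t * η t - (𝔞 t + 𝔟 t * η t) * χ t) t)
    (hχT : χ T = r)
    (W x : ℝ → ℝ) (hW : Continuous W) (hW0 : W 0 = 0) (hx : Continuous x)
    (hxeq : ∀ t ∈ Set.Icc (0:ℝ) T,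
      x t = x0 + (∫ s in (0:ℝ)..t, (𝔞 s * x s + 𝔟 s * (η s * x s + χ s) + 𝔠 s)) + σ * W t)
    (y z : ℝ → ℝ)
    (hy : ∀ t, y t = η t * x t + χ t) (hz : ∀ t, z t = σ * η t) :
    (∀ t ∈ Set.Icc (0:ℝ) T,
      y t = y 0 + (∫ s in (0:ℝ)..t, (𝔪 s * x s - 𝔞 s * y s + 𝔡 s)) +
        (z t * W t - ∫ s in (0:ℝ)..t,
          σ * (-𝔟 s * (η s) ^ 2 - 2 * 𝔞 s * η s + 𝔪 s) * W s)) ∧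
    y T = q * x T + r :=
  stmt8_general T σ q r x0 𝔞 𝔟 𝔠 𝔪 𝔡 η χ h𝔞 h𝔟 h𝔠 h𝔪 h𝔡 hη hηT hχ hχT W x hW hW0 hx hxeq y z hy hz
end

section
/- In the simple MFG example, the process x_t = x⁰(1+𝔮(T−t))/(1+𝔮T) − 𝔯t/(1+𝔮T) + σ(1+𝔮(T−t))∫_0^t dW_s/(1+𝔮(T−s)), with y_t = (𝔮 x_t + 𝔯)/(1+𝔮(T−t)), satisfies dx_t = −y_t dt + σ dW_t, x_0 = x⁰, and y_T = 𝔮 x_T + 𝔯, where 𝔮 ≥ 0. -/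
/-!
Write `D t = 1 + q (T - t)` and `I t = ∫_0^t dW_s / D s`, so that
`x t = x⁰ D t / D 0 - r t / D 0 + σ D t I t`. Integration by parts gives `d(D I) = D' I dt + dW`,
hence `x - σ W` is differentiable with derivative `-(q x⁰ + r) / D 0 - σ q I`. Since
`D 0 - q t = D t`, this is exactly `-(q x + r) / D = -y`, and the fundamental theorem of calculus
gives the forward equation. The terminal condition holds because `D T = 1`.
-/

open intervalIntegral Set Filter Topology

/-- Pathwise value of the Wiener integral `∫_a^t dW_s / D s` when `W a = 0`, by integration by
parts; `D'` is the derivative of `D`. -/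
noncomputable def wienerIntegralInv (D D' W : ℝ → ℝ) (a t : ℝ) : ℝ :=
  W t / D t + ∫ s in a..t, D' s / D s ^ 2 * W s

theorem hasDerivAt_mul_wienerIntegralInv_sub {D D' W : ℝ → ℝ} {a t : ℝ}
    (hD : ∀ s, HasDerivAt D (D' s) s) (hD' : Continuous D') (hW : Continuous W)
    (hD0 : ∀ s ∈ uIcc a t, D s ≠ 0) :
    HasDerivAt (fun u => D u * wienerIntegralInv D D' W a u - W u)
      (D' t * wienerIntegralInv D D' W a t) t := by
  have hDc : Continuous D := continuous_iff_continuousAt.2 fun s => (hD s).continuousAt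
  set U : Set ℝ := {s | D s ≠ 0}
  have hU : IsOpen U := isOpen_ne_fun hDc continuous_const
  have ht : t ∈ U := hD0 t right_mem_uIcc
  have hf : ContinuousOn (fun s => D' s / D s ^ 2 * W s) U := fun s hs =>
    ((hD'.continuousAt.div (hDc.continuousAt.pow 2) (pow_ne_zero 2 hs)).mul
      hW.continuousAt).continuousWithinAt
  have hJ : HasDerivAt (fun u => ∫ s in a..u, D' s / D s ^ 2 * W s) (D' t / D t ^ 2 * W t) t :=
    integral_hasDerivAt_right (hf.mono hD0).intervalIntegrable
      (hf.stronglyMeasurableAtFilter hU t ht) (hf.continuousAt (hU.mem_nhds ht))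
  have hDI : (fun u => D u * ∫ s in a..u, D' s / D s ^ 2 * W s) =ᶠ[𝓝 t]
      fun u => D u * wienerIntegralInv D D' W a u - W u := by
    filter_upwards [hU.mem_nhds ht] with u hu
    simp only [wienerIntegralInv]
    field_simp [show D u ≠ 0 from hu]
    ring
  refine (((hD t).mul hJ).congr_of_eventuallyEq hDI.symm).congr_deriv ?_
  simp only [wienerIntegralInv]
  field_simp [show D t ≠ 0 from ht]
  ring

namespace SimpleMFG

noncomputable def wienerIntegral (T q : ℝ) (W : ℝ → ℝ) (t : ℝ) : ℝ :=
  W t / (1 + q * (T - t)) - ∫ s in (0:ℝ)..t, q / (1 + q * (T - s)) ^ 2 * W s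

noncomputable def state (T σ q r x0 : ℝ) (W : ℝ → ℝ) (t : ℝ) : ℝ :=
  x0 * (1 + q * (T - t)) / (1 + q * T) - r * t / (1 + q * T) +
    σ * (1 + q * (T - t)) * wienerIntegral T q W t

noncomputable def control (T σ q r x0 : ℝ) (W : ℝ → ℝ) (t : ℝ) : ℝ :=
  (q * state T σ q r x0 W t + r) / (1 + q * (T - t))

variable {T σ q r x0 : ℝ} {W : ℝ → ℝ}

theorem one_add_mul_sub_pos (hq : 0 ≤ q) {t : ℝ} (ht : t ≤ T) : 0 < 1 + q * (T - t) := by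
  linarith [mul_nonneg hq (sub_nonneg.2 ht)]

theorem hasDerivAt_one_add_mul_sub (t : ℝ) : HasDerivAt (fun u => 1 + q * (T - u)) (-q) t := by
  simpa using (((hasDerivAt_id t).const_sub T).const_mul q).const_add 1

theorem wienerIntegral_eq_wienerIntegralInv :
    wienerIntegral T q W = wienerIntegralInv (fun u => 1 + q * (T - u)) (fun _ => -q) W 0 := by
  funext t
  simp [wienerIntegral, wienerIntegralInv, neg_div, integral_neg, sub_eq_add_neg]

theorem state_zero (hT : 0 ≤ T) (hq : 0 ≤ q) (hW0 : W 0 = 0) : state T σ q r x0 W 0 = x0 := by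
  have : 0 < 1 + q * T := by linarith [mul_nonneg hq hT]
  simp [state, wienerIntegral, hW0]
  field_simp

theorem control_terminal : control T σ q r x0 W T = q * state T σ q r x0 W T + r := by
  simp [control]

theorem hasDerivAt_state_sub (hq : 0 ≤ q) (hW : Continuous W) {t : ℝ} (ht : t ∈ Icc 0 T) :
    HasDerivAt (fun u => state T σ q r x0 W u - σ * W u) (-control T σ q r x0 W t) t := by
  have hI := hasDerivAt_mul_wienerIntegralInv_sub hasDerivAt_one_add_mul_sub continuous_const hW
    (a := 0) (t := t) fun s hs => (one_add_mul_sub_pos hq ((uIcc_of_le ht.1 ▸ hs).2.trans ht.2)).ne'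
  rw [← wienerIntegral_eq_wienerIntegralInv] at hI
  have hstate : (fun u => state T σ q r x0 W u - σ * W u) = fun u =>
      x0 * (1 + q * (T - u)) / (1 + q * T) - r * u / (1 + q * T) +
        σ * ((1 + q * (T - u)) * wienerIntegral T q W u - W u) := by
    funext u
    simp only [state]
    ring
  rw [hstate]
  refine ((((hasDerivAt_one_add_mul_sub t).const_mul x0).div_const _).sub
    (((hasDerivAt_id t).const_mul r).div_const _) |>.add (hI.const_mul σ)).congr_deriv ?_
  have : 0 < 1 + q * T := by linarith [mul_nonneg hq (ht.1.trans ht.2)]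
  simp only [control, state]
  field_simp [(one_add_mul_sub_pos hq ht.2).ne']
  ring

theorem continuousOn_control (hq : 0 ≤ q) (hW : Continuous W) :
    ContinuousOn (control T σ q r x0 W) (Icc 0 T) := by
  intro t ht
  have hstate : ContinuousAt (state T σ q r x0 W) t := by
    have h := (hasDerivAt_state_sub (σ := σ) (r := r) (x0 := x0) hq hW ht).continuousAt.add
      (hW.continuousAt.const_mul σ)
    simpa only [Pi.add_def, sub_add_cancel] using h
  exact ((hstate.const_mul q).add continuousAt_const).div
    (hasDerivAt_one_add_mul_sub t).continuousAt (one_add_mul_sub_pos hq ht.2).ne'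
    |>.continuousWithinAt

theorem state_eq_sub_integral_control (hT : 0 ≤ T) (hq : 0 ≤ q) (hW : Continuous W)
    (hW0 : W 0 = 0) {t : ℝ} (ht : t ∈ Icc 0 T) :
    state T σ q r x0 W t = x0 - (∫ s in (0:ℝ)..t, control T σ q r x0 W s) + σ * W t := by
  have hsub : uIcc 0 t ⊆ Icc 0 T := uIcc_of_le ht.1 ▸ Icc_subset_Icc_right ht.2
  have hFTC := integral_eq_sub_of_hasDerivAt (f := fun u => state T σ q r x0 W u - σ * W u)
    (fun s hs => hasDerivAt_state_sub hq hW (hsub hs))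
    ((continuousOn_control hq hW).neg.mono hsub).intervalIntegrable
  simp only [integral_neg, hW0, state_zero hT hq hW0] at hFTC
  linarith

end SimpleMFG

open SimpleMFG in
theorem stmt12_general (T σ q r x0 : ℝ) (hT : 0 < T) (hq : 0 ≤ q)
    (W : ℝ → ℝ) (hW : Continuous W) (hW0 : W 0 = 0) :
    let I : ℝ → ℝ := fun t =>
      W t / (1 + q * (T - t)) - ∫ s in (0:ℝ)..t, q / (1 + q * (T - s)) ^ 2 * W s
    let x : ℝ → ℝ := fun t =>
      x0 * (1 + q * (T - t)) / (1 + q * T) - r * t / (1 + q * T) +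
        σ * (1 + q * (T - t)) * I t
    let y : ℝ → ℝ := fun t => (q * x t + r) / (1 + q * (T - t))
    x 0 = x0 ∧ y T = q * x T + r ∧
      ∀ t ∈ Set.Icc (0:ℝ) T, x t = x0 - (∫ s in (0:ℝ)..t, y s) + σ * W t :=
  ⟨state_zero hT.le hq hW0, control_terminal,
    fun _ ht => state_eq_sub_integral_control hT.le hq hW hW0 ht⟩

/-- In the simple MFG example, the explicit process
x_t = x⁰(1+𝔮(T−t))/(1+𝔮T) − 𝔯t/(1+𝔮T) + σ(1+𝔮(T−t))∫_0^t dW_s/(1+𝔮(T−s)),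
with y_t = (𝔮x_t+𝔯)/(1+𝔮(T−t)), satisfies dx_t = −y_t dt + σ dW_t, x_0 = x⁰ and
y_T = 𝔮 x_T + 𝔯 (with 𝔮 ≥ 0).  The stochastic integral of the deterministic C¹
integrand is expressed pathwise by integration by parts (W_0 = 0):
∫_0^t dW_s/(1+𝔮(T−s)) = W_t/(1+𝔮(T−t)) − ∫_0^t 𝔮 W_s/(1+𝔮(T−s))² ds. -/
theorem stmt12 (T σ q r x0 : ℝ) (hT : 0 < T) (hσ : 0 < σ) (hq : 0 ≤ q)
    (W : ℝ → ℝ) (hW : Continuous W) (hW0 : W 0 = 0) :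
    let I : ℝ → ℝ := fun t =>
      W t / (1 + q * (T - t)) - ∫ s in (0:ℝ)..t, q / (1 + q * (T - s)) ^ 2 * W s
    let x : ℝ → ℝ := fun t =>
      x0 * (1 + q * (T - t)) / (1 + q * T) - r * t / (1 + q * T) +
        σ * (1 + q * (T - t)) * I t
    let y : ℝ → ℝ := fun t => (q * x t + r) / (1 + q * (T - t))
    x 0 = x0 ∧ y T = q * x T + r ∧
      ∀ t ∈ Set.Icc (0:ℝ) T, x t = x0 - (∫ s in (0:ℝ)..t, y s) + σ * W t :=
  stmt12_general T σ q r x0 hT hq W hW hW0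
end

section
/- Let u(t,x) = ∫_ℝ φ_{x,σ²(T−t)}(y) exp(−λσ^{-2}(y−Λ)^+) dy, where φ_{m,v} is the Gaussian density with mean m and variance v. Then v(t,x) := −σ² log u(t,x) satisfies 0 ≤ ∂_x v(t,x) ≤ λ for all t ∈ [0,T), x ∈ ℝ. -/
open MeasureTheory

/-- Density of the Gaussian distribution with mean m and variance v. -/
noncomputable def gaussDensity (m v y : ℝ) : ℝ :=
  (Real.sqrt (2 * Real.pi * v))⁻¹ * Real.exp (-(y - m) ^ 2 / (2 * v))

/-!
The Hopf–Cole value `v = -σ² log u` is monotone exactly when `u` is antitone, and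
`λ x - v` is monotone exactly when `x ↦ e^{cx} u(x)` is monotone, `c = λ/σ²`.
Writing `u(x) = ∫ φ_{0,V}(z) w(z + x) dz` with `w(y) = e^{-c (y-Λ)⁺}`, both properties
are inherited pointwise from `w`, which is antitone while `e^{cy} w(y) = e^{c min(y, Λ)}`
is monotone. A function `f` with `f` and `λ x - f` monotone has `0 ≤ f' ≤ λ` wherever
it is differentiable, and `deriv f = 0` elsewhere.
-/

open Real

lemma deriv_le_of_monotone_mul_sub {f : ℝ → ℝ} {K : ℝ} (hK : 0 ≤ K)
    (hf : Monotone fun x => K * x - f x) (x : ℝ) : deriv f x ≤ K := by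
  by_cases hd : DifferentiableAt ℝ f x
  · have h := hf.deriv_nonneg (x := x)
    rw [(((hasDerivAt_id' x).const_mul K).fun_sub hd.hasDerivAt).deriv] at h
    linarith
  · rwa [deriv_zero_of_not_differentiableAt hd]

section NegLog

variable {F : ℝ → ℝ} {s : ℝ}

lemma monotone_neg_mul_log (hF : ∀ x, 0 < F x) (hs : 0 ≤ s) (h : Antitone F) :
    Monotone fun x => -s * log (F x) := fun a b hab => by
  have := log_le_log (hF b) (h hab)
  nlinarith

lemma monotone_mul_sub_neg_mul_log (hF : ∀ x, 0 < F x) (hs : 0 ≤ s) {c : ℝ}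
    (h : Monotone fun x => exp (c * x) * F x) :
    Monotone fun x => s * c * x - -s * log (F x) := fun a b hab => by
  have := log_le_log (by have := hF a; positivity) (h hab)
  rw [log_mul (exp_ne_zero _) (hF a).ne', log_mul (exp_ne_zero _) (hF b).ne', log_exp,
    log_exp] at this
  nlinarith

end NegLog

lemma gaussDensity_eq_gaussianPDFReal {v : ℝ} (hv : 0 ≤ v) (m : ℝ) :
    gaussDensity m v = ProbabilityTheory.gaussianPDFReal m ⟨v, hv⟩ := rfl

lemma gaussDensity_eq_sub (m v y : ℝ) : gaussDensity m v y = gaussDensity 0 v (y - m) := by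
  simp [gaussDensity]

noncomputable def gaussConv (v : ℝ) (w : ℝ → ℝ) (x : ℝ) : ℝ :=
  ∫ y, gaussDensity x v y * w y

lemma gaussConv_eq_integral_add (v : ℝ) (w : ℝ → ℝ) (x : ℝ) :
    gaussConv v w x = ∫ z, gaussDensity 0 v z * w (z + x) := by
  simp_rw [gaussConv, gaussDensity_eq_sub x v]
  simpa using integral_sub_right_eq_self (fun z => gaussDensity 0 v z * w (z + x)) x

lemma mul_gaussConv (k v : ℝ) (w : ℝ → ℝ) (x : ℝ) :
    k * gaussConv v w x = gaussConv v (fun y => k * w y) x := by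
  rw [gaussConv, gaussConv, ← integral_const_mul]
  simp only [mul_left_comm]

section GaussConv

variable {v C : ℝ} {w : ℝ → ℝ}

lemma gaussDensity_pos (hv : 0 < v) (m y : ℝ) : 0 < gaussDensity m v y := by
  unfold gaussDensity
  positivity

lemma integrable_gaussDensity (hv : 0 < v) (m : ℝ) : Integrable (gaussDensity m v) := by
  rw [gaussDensity_eq_gaussianPDFReal hv.le]
  exact ProbabilityTheory.integrable_gaussianPDFReal _ _

lemma integrable_gaussDensity_mul_comp_add (hv : 0 < v) (hw : Measurable w)
    (hC : ∀ y, ‖w y‖ ≤ C) (x : ℝ) :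
    Integrable fun z => gaussDensity 0 v z * w (z + x) :=
  (integrable_gaussDensity hv 0).mul_bdd (hw.comp (measurable_add_const x)).aestronglyMeasurable
    (ae_of_all _ fun _ => hC _)

lemma gaussConv_pos (hv : 0 < v) (hw : Measurable w) (hC : ∀ y, ‖w y‖ ≤ C)
    (hpos : ∀ y, 0 < w y) (x : ℝ) : 0 < gaussConv v w x := by
  have hint : Integrable fun y => gaussDensity x v y * w y :=
    (integrable_gaussDensity hv x).mul_bdd hw.aestronglyMeasurable (ae_of_all _ hC)
  have hint_pos : ∀ y, 0 < gaussDensity x v y * w y := fun y =>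
    mul_pos (gaussDensity_pos hv x y) (hpos y)
  rw [gaussConv, integral_pos_iff_support_of_nonneg (fun y => (hint_pos y).le) hint,
    Function.support_eq_univ fun y => (hint_pos y).ne']
  simp

lemma gaussConv_le_gaussConv {w' : ℝ → ℝ} {C' : ℝ} (hv : 0 < v) (hw : Measurable w)
    (hC : ∀ y, ‖w y‖ ≤ C) (hw' : Measurable w') (hC' : ∀ y, ‖w' y‖ ≤ C') {a b : ℝ}
    (hle : ∀ z, w (z + a) ≤ w' (z + b)) : gaussConv v w a ≤ gaussConv v w' b := by
  rw [gaussConv_eq_integral_add, gaussConv_eq_integral_add]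
  refine integral_mono (integrable_gaussDensity_mul_comp_add hv hw hC a)
    (integrable_gaussDensity_mul_comp_add hv hw' hC' b) fun z => ?_
  exact mul_le_mul_of_nonneg_left (hle z) (gaussDensity_pos hv 0 z).le

lemma antitone_gaussConv (hv : 0 < v) (hw : Measurable w) (hC : ∀ y, ‖w y‖ ≤ C)
    (h : Antitone w) : Antitone (gaussConv v w) := fun _ _ hab =>
  gaussConv_le_gaussConv hv hw hC hw hC fun _ => h (add_le_add_right hab _)

lemma monotone_exp_mul_gaussConv (hv : 0 < v) (hw : Measurable w) (hC : ∀ y, ‖w y‖ ≤ C)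
    {c : ℝ} (h : Monotone fun y => exp (c * y) * w y) :
    Monotone fun x => exp (c * x) * gaussConv v w x := fun a b hab => by
  have hbdd : ∀ k, ∀ y, ‖k * w y‖ ≤ ‖k‖ * C := fun k y => by
    rw [norm_mul]; exact mul_le_mul_of_nonneg_left (hC y) (norm_nonneg k)
  simp only [mul_gaussConv]
  refine gaussConv_le_gaussConv hv (hw.const_mul _) (hbdd _) (hw.const_mul _) (hbdd _)
    fun z => ?_
  have hz := h (add_le_add_right hab z)
  simp only [mul_add, exp_add, mul_assoc] at hz
  exact le_of_mul_le_mul_left hz (exp_pos _)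

end GaussConv

section HingeWeight

variable {c : ℝ} (Λ : ℝ)

lemma norm_exp_neg_mul_max_le_one (hc : 0 ≤ c) (y : ℝ) :
    ‖exp (-c * max (y - Λ) 0)‖ ≤ 1 := by
  rw [norm_of_nonneg (exp_pos _).le, exp_le_one_iff]
  nlinarith [le_max_right (y - Λ) 0]

lemma antitone_exp_neg_mul_max (hc : 0 ≤ c) : Antitone fun y => exp (-c * max (y - Λ) 0) :=
  fun _ _ hab => exp_le_exp.2 <| by
    nlinarith [max_le_max_right 0 (sub_le_sub_right hab Λ)]

lemma monotone_exp_mul_mul_exp_neg_mul_max (hc : 0 ≤ c) :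
    Monotone fun y => exp (c * y) * exp (-c * max (y - Λ) 0) := by
  have hmin : ∀ y, c * y + -c * max (y - Λ) 0 = c * min y Λ := fun y => by
    rcases le_total y Λ with hy | hy
    · rw [max_eq_right (by linarith), min_eq_left hy]; ring
    · rw [max_eq_left (by linarith), min_eq_right hy]; ring
  intro a b hab
  simp only [← exp_add, hmin]
  exact exp_le_exp.2 (mul_le_mul_of_nonneg_left (min_le_min_right Λ hab) hc)

end HingeWeight

theorem stmt15_general (σ lam Λ T : ℝ) (hσ : 0 < σ) (hlam : 0 < lam) :
    let u : ℝ → ℝ → ℝ := fun t x =>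
      ∫ y : ℝ, gaussDensity x (σ ^ 2 * (T - t)) y * Real.exp (-(lam / σ ^ 2) * max (y - Λ) 0)
    let v : ℝ → ℝ → ℝ := fun t x => -σ ^ 2 * Real.log (u t x)
    ∀ t ∈ Set.Ico (0:ℝ) T, ∀ x : ℝ,
      0 ≤ deriv (fun x' => v t x') x ∧ deriv (fun x' => v t x') x ≤ lam := by
  intro u v t ht x
  set c := lam / σ ^ 2
  have hc : 0 ≤ c := by positivity
  have hV : 0 < σ ^ 2 * (T - t) := mul_pos (by positivity) (sub_pos.2 ht.2)
  have hw : Measurable fun y => exp (-c * max (y - Λ) 0) := by fun_prop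
  have hu : u t = gaussConv (σ ^ 2 * (T - t)) fun y => exp (-c * max (y - Λ) 0) := rfl
  have hu_pos : ∀ x, 0 < u t x := by
    rw [hu]
    exact gaussConv_pos hV hw (norm_exp_neg_mul_max_le_one Λ hc) fun _ => exp_pos _
  have hv_mono : Monotone (v t) := monotone_neg_mul_log hu_pos (sq_nonneg σ) <| by
    rw [hu]
    exact antitone_gaussConv hV hw (norm_exp_neg_mul_max_le_one Λ hc)
      (antitone_exp_neg_mul_max Λ hc)
  have hlam_sub_v_mono : Monotone fun x => lam * x - v t x := by
    have h := monotone_mul_sub_neg_mul_log hu_pos (sq_nonneg σ) (c := c) <| by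
      rw [hu]
      exact monotone_exp_mul_gaussConv hV hw (norm_exp_neg_mul_max_le_one Λ hc)
        (monotone_exp_mul_mul_exp_neg_mul_max Λ hc)
    rwa [mul_div_cancel₀ lam (by positivity)] at h
  exact ⟨hv_mono.deriv_nonneg, deriv_le_of_monotone_mul_sub hlam.le hlam_sub_v_mono x⟩

/-- With u(t,x) = ∫ φ_{x,σ²(T−t)}(y) e^{−λσ⁻²(y−Λ)⁺} dy and v = −σ² log u, one has
0 ≤ ∂_x v(t,x) ≤ λ for all t ∈ [0,T) and x ∈ ℝ. -/
theorem stmt15 (σ lam Λ T : ℝ) (hσ : 0 < σ) (hlam : 0 < lam) (hT : 0 < T) :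
    let u : ℝ → ℝ → ℝ := fun t x =>
      ∫ y : ℝ, gaussDensity x (σ ^ 2 * (T - t)) y * Real.exp (-(lam / σ ^ 2) * max (y - Λ) 0)
    let v : ℝ → ℝ → ℝ := fun t x => -σ ^ 2 * Real.log (u t x)
    ∀ t ∈ Set.Ico (0:ℝ) T, ∀ x : ℝ,
      0 ≤ deriv (fun x' => v t x') x ∧ deriv (fun x' => v t x') x ≤ lam :=
  stmt15_general σ lam Λ T hσ hlam
end
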